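/- Let L be a real skew-symmetric n×n matrix (Lᵀ = -L), η > 0, β ∈ ℝ, γ* = η + β²/η, and P = [(ηI - L)² + β²I]((ηI - L)(γ*I - L))⁻¹. Then κ(P) ≤ 1 + β²/(2η²). -/

import Mathlib

open Matrix

/-- The continuous linear map on Euclidean space induced by a real matrix;
`‖toE A‖` is the operator 2-norm of `A`, and `inner` gives the Euclidean
inner product. -/
noncomputable def toE {n : ℕ} (A : Matrix (Fin n) (Fin n) ℝ) :
    EuclideanSpace ℝ (Fin n) →L[ℝ] EuclideanSpace ℝ (Fin n) :=
  Matrix.toEuclideanCLM (𝕜 := ℝ) A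

section helpers

variable {n : ℕ}

lemma toE_mul (A B : Matrix (Fin n) (Fin n) ℝ) : toE (A * B) = toE A * toE B :=
  map_mul _ _ _

lemma toE_add (A B : Matrix (Fin n) (Fin n) ℝ) : toE (A + B) = toE A + toE B :=
  map_add _ _ _

lemma toE_smul (c : ℝ) (A : Matrix (Fin n) (Fin n) ℝ) : toE (c • A) = c • toE A :=
  map_smul _ _ _

lemma toE_one : toE (1 : Matrix (Fin n) (Fin n) ℝ) = 1 :=
  _root_.map_one _

lemma toE_sub (A B : Matrix (Fin n) (Fin n) ℝ) : toE (A - B) = toE A - toE B :=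
  _root_.map_sub _ _ _

lemma isUnit_of_toE_inj (M : Matrix (Fin n) (Fin n) ℝ)
    (h : Function.Injective (toE M)) : IsUnit M := by
  rw [← Matrix.mulVec_injective_iff_isUnit]
  intro a b hab
  have : toE M ((WithLp.equiv 2 _).symm a) = toE M ((WithLp.equiv 2 _).symm b) := by
    show WithLp.toLp 2 (M *ᵥ a) = WithLp.toLp 2 (M *ᵥ b)
    exact congrArg _ hab
  simpa using congrArg (WithLp.equiv 2 _) (h this)

end helpers

section skew

variable {E : Type*} [NormedAddCommGroup E] [InnerProductSpace ℝ E]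

local notation "⟪" x ", " y "⟫" => @inner ℝ _ _ x y

lemma skew_inner_self (A : E →L[ℝ] E) (hA : ∀ x y : E, ⟪A x, y⟫ = -⟪x, A y⟫) (x : E) :
    ⟪A x, x⟫ = 0 := by
  have h1 := hA x x
  have h2 : ⟪x, A x⟫ = ⟪A x, x⟫ := real_inner_comm _ _
  linarith [h1, h2]

/-- Key pointwise estimates.  `N x = M (M x) + β² x` and `Q x = M (M x) + (β²/η) (M x)`
where `M x = η x - A x`. -/
lemma key_estimates (A : E →L[ℝ] E) (hA : ∀ x y : E, ⟪A x, y⟫ = -⟪x, A y⟫)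
    (η β : ℝ) (hη : 0 < η) (x : E) :
    ‖(η • (η • x - A x) - A (η • x - A x)) + β ^ 2 • x‖ ≤
      ‖(η • (η • x - A x) - A (η • x - A x)) + (β ^ 2 / η) • (η • x - A x)‖ ∧
    ‖(η • (η • x - A x) - A (η • x - A x)) + (β ^ 2 / η) • (η • x - A x)‖ ≤
      (1 + β ^ 2 / (2 * η ^ 2)) *
        ‖(η • (η • x - A x) - A (η • x - A x)) + β ^ 2 • x‖ ∧
    ((η • (η • x - A x) - A (η • x - A x)) + β ^ 2 • x = 0 → x = 0) := by
  have hself : ∀ z : E, ⟪A z, z⟫ = 0 := skew_inner_self A hA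
  have hself' : ∀ z : E, ⟪z, A z⟫ = 0 := fun z => by
    rw [real_inner_comm]; exact hself z
  set y := η • x - A x with hy
  set u := η • y - A y with hu
  set a := β ^ 2 / η with ha
  have haη : a * η = β ^ 2 := by rw [ha]; field_simp
  -- basic scalar facts
  have f2 : ‖y‖ ^ 2 = η ^ 2 * ‖x‖ ^ 2 + ‖A x‖ ^ 2 := by
    rw [hy, @norm_sub_sq_real, real_inner_smul_left, hself', norm_smul, mul_pow]
    simp [sq_abs]
  have f3 : ⟪u, y⟫ = η * ‖y‖ ^ 2 := by
    rw [hu, inner_sub_left, real_inner_smul_left, real_inner_self_eq_norm_sq, hself]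
    ring
  have fyx : ⟪y, x⟫ = η * ‖x‖ ^ 2 := by
    rw [hy, inner_sub_left, real_inner_smul_left, real_inner_self_eq_norm_sq, hself]
    ring
  have fyAx : ⟪y, A x⟫ = -‖A x‖ ^ 2 := by
    rw [hy, inner_sub_left, real_inner_smul_left, hself', real_inner_self_eq_norm_sq]
    ring
  have f4 : ⟪u, x⟫ = η ^ 2 * ‖x‖ ^ 2 - ‖A x‖ ^ 2 := by
    rw [hu, inner_sub_left, real_inner_smul_left, fyx, hA, fyAx]
    ring
  -- ‖Q x‖²
  have fQ : ‖u + a • y‖ ^ 2 = ‖u‖ ^ 2 + 2 * a * η * ‖y‖ ^ 2 + a ^ 2 * ‖y‖ ^ 2 := by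
    rw [@norm_add_sq_real, real_inner_smul_right, f3, norm_smul, mul_pow]
    simp [sq_abs]
    ring
  -- ‖N x‖²
  have fN : ‖u + β ^ 2 • x‖ ^ 2 =
      ‖u‖ ^ 2 + 2 * β ^ 2 * (η ^ 2 * ‖x‖ ^ 2 - ‖A x‖ ^ 2) + β ^ 4 * ‖x‖ ^ 2 := by
    rw [@norm_add_sq_real, real_inner_smul_right, f4, norm_smul, mul_pow]
    simp [sq_abs]
    ring
  -- second decomposition of N x
  have f6 : u + β ^ 2 • x = ((η ^ 2 + β ^ 2) • x + A (A x)) - (2 * η) • A x := by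
    rw [hu, hy]
    simp only [map_sub, _root_.map_smul]
    module
  have f7 : ⟪(η ^ 2 + β ^ 2) • x + A (A x), A x⟫ = 0 := by
    rw [inner_add_left, real_inner_smul_left, hself', hself]
    ring
  have f8 : ‖u + β ^ 2 • x‖ ^ 2 =
      ‖(η ^ 2 + β ^ 2) • x + A (A x)‖ ^ 2 + 4 * η ^ 2 * ‖A x‖ ^ 2 := by
    rw [f6, @norm_sub_sq_real, real_inner_smul_right, f7, norm_smul, mul_pow, Real.norm_eq_abs, sq_abs]
    ring
  have hxnn : (0:ℝ) ≤ ‖x‖ ^ 2 := sq_nonneg _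
  have hAxnn : (0:ℝ) ≤ ‖A x‖ ^ 2 := sq_nonneg _
  have hwnn : (0:ℝ) ≤ ‖(η ^ 2 + β ^ 2) • x + A (A x)‖ ^ 2 := sq_nonneg _
  have hc : (0:ℝ) < 1 + β ^ 2 / (2 * η ^ 2) := by positivity
  have h2a : a ^ 2 * η ^ 2 = β ^ 4 := by rw [ha]; field_simp
  have key1 : 2 * a * η * (η ^ 2 * ‖x‖ ^ 2 + ‖A x‖ ^ 2)
      + a ^ 2 * (η ^ 2 * ‖x‖ ^ 2 + ‖A x‖ ^ 2)
      - (2 * β ^ 2 * (η ^ 2 * ‖x‖ ^ 2 - ‖A x‖ ^ 2) + β ^ 4 * ‖x‖ ^ 2)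
      = (4 * β ^ 2 + a ^ 2) * ‖A x‖ ^ 2 := by
    linear_combination 2 * (η ^ 2 * ‖x‖ ^ 2 + ‖A x‖ ^ 2) * haη + ‖x‖ ^ 2 * h2a
  have hΔnn : (0:ℝ) ≤ (4 * β ^ 2 + a ^ 2) * ‖A x‖ ^ 2 :=
    mul_nonneg (by positivity) hAxnn
  clear_value y u a
  refine ⟨?_, ?_, ?_⟩
  · -- ‖N x‖ ≤ ‖Q x‖
    have hsq : ‖u + β ^ 2 • x‖ ^ 2 ≤ ‖u + a • y‖ ^ 2 := by
      rw [fQ, fN, f2]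
      linarith [key1, hΔnn]
    have := Real.sqrt_le_sqrt hsq
    rwa [Real.sqrt_sq (norm_nonneg _), Real.sqrt_sq (norm_nonneg _)] at this
  · -- ‖Q x‖ ≤ c ‖N x‖
    have hsq : ‖u + a • y‖ ^ 2 ≤
        ((1 + β ^ 2 / (2 * η ^ 2)) * ‖u + β ^ 2 • x‖ ^ 2) * (1 + β ^ 2 / (2 * η ^ 2)) := by
      have e1 : ‖u + a • y‖ ^ 2 = ‖u + β ^ 2 • x‖ ^ 2 + (4 * β ^ 2 + a ^ 2) * ‖A x‖ ^ 2 := by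
        rw [fQ, fN, f2]
        linarith [key1]
      have e2 : (1 + β ^ 2 / (2 * η ^ 2)) * (1 + β ^ 2 / (2 * η ^ 2)) - 1 =
          (4 * β ^ 2 + a ^ 2) / (4 * η ^ 2) := by
        rw [ha]; field_simp; ring
      have e3 : ((1 + β ^ 2 / (2 * η ^ 2)) * (1 + β ^ 2 / (2 * η ^ 2)) - 1) *
          ‖u + β ^ 2 • x‖ ^ 2 ≥ (4 * β ^ 2 + a ^ 2) * ‖A x‖ ^ 2 := by
        rw [e2, f8]
        have h4 : (4 * β ^ 2 + a ^ 2) * ‖A x‖ ^ 2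
            = (4 * β ^ 2 + a ^ 2) / (4 * η ^ 2) * (4 * η ^ 2 * ‖A x‖ ^ 2) := by
          field_simp
        rw [ge_iff_le, h4]
        have h5 : 4 * η ^ 2 * ‖A x‖ ^ 2 ≤
            ‖(η ^ 2 + β ^ 2) • x + A (A x)‖ ^ 2 + 4 * η ^ 2 * ‖A x‖ ^ 2 :=
          le_add_of_nonneg_left hwnn
        exact mul_le_mul_of_nonneg_left h5 (by positivity)
      set c := 1 + β ^ 2 / (2 * η ^ 2) with hcdef
      set N2 := ‖u + β ^ 2 • x‖ ^ 2 with hN2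
      set Q2 := ‖u + a • y‖ ^ 2 with hQ2
      clear_value c N2 Q2
      calc Q2 = N2 + (4 * β ^ 2 + a ^ 2) * ‖A x‖ ^ 2 := e1
        _ ≤ N2 + (c * c - 1) * N2 := add_le_add_right e3 N2
        _ = (c * N2) * c := by ring
    have h2 : ‖u + a • y‖ ^ 2 ≤ ((1 + β ^ 2 / (2 * η ^ 2)) * ‖u + β ^ 2 • x‖) ^ 2 := by
      have hr : ((1 + β ^ 2 / (2 * η ^ 2)) * ‖u + β ^ 2 • x‖) ^ 2
          = ((1 + β ^ 2 / (2 * η ^ 2)) * ‖u + β ^ 2 • x‖ ^ 2) * (1 + β ^ 2 / (2 * η ^ 2)) := by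
        ring
      rw [hr]; exact hsq
    have := Real.sqrt_le_sqrt h2
    rwa [Real.sqrt_sq (norm_nonneg _),
      Real.sqrt_sq (by positivity)] at this
  · -- injectivity of N
    intro hN0
    have h0 : ‖u + β ^ 2 • x‖ ^ 2 = 0 := by rw [hN0]; simp
    rw [f8] at h0
    have h6 : 4 * η ^ 2 * ‖A x‖ ^ 2 = 0 :=
      le_antisymm (by linarith) (by positivity)
    have hAx0 : ‖A x‖ ^ 2 = 0 :=
      (mul_eq_zero.mp h6).resolve_left (by positivity)
    have hAx : A x = 0 := by
      have := (pow_eq_zero_iff (n := 2) (by norm_num)).mp hAx0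
      exact norm_eq_zero.mp this
    have hw0 : ((η ^ 2 + β ^ 2) • x + A (A x)) = 0 := by
      have : ‖(η ^ 2 + β ^ 2) • x + A (A x)‖ ^ 2 = 0 := by linarith
      exact norm_eq_zero.mp ((pow_eq_zero_iff (n := 2) (by norm_num)).mp this)
    rw [hAx, map_zero, add_zero] at hw0
    have hpos : (0:ℝ) < η ^ 2 + β ^ 2 := by positivity
    have := smul_eq_zero.mp hw0
    rcases this with h | h
    · exact absurd h (ne_of_gt hpos)
    · exact h
end skew

theorem stmt_16 {n : ℕ} (L : Matrix (Fin n) (Fin n) ℝ)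
    (hL : Lᵀ = -L)
    (η β γs : ℝ) (hη : 0 < η) (hγs : γs = η + β ^ 2 / η)
    (P : Matrix (Fin n) (Fin n) ℝ)
    (hP : P = ((η • (1 : Matrix (Fin n) (Fin n) ℝ) - L) ^ 2
          + β ^ 2 • (1 : Matrix (Fin n) (Fin n) ℝ))
        * ((η • (1 : Matrix (Fin n) (Fin n) ℝ) - L)
          * (γs • (1 : Matrix (Fin n) (Fin n) ℝ) - L))⁻¹) :
    ‖toE P‖ * ‖toE P⁻¹‖ ≤ 1 + β ^ 2 / (2 * η ^ 2) := by
  set Mm := η • (1 : Matrix (Fin n) (Fin n) ℝ) - L with hMm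
  set Gm := γs • (1 : Matrix (Fin n) (Fin n) ℝ) - L with hGm
  set Nm := Mm ^ 2 + β ^ 2 • (1 : Matrix (Fin n) (Fin n) ℝ) with hNm
  set Qm := Mm * Gm with hQm
  set A := toE L with hAdef
  -- skew-adjointness of A
  have hstar : toE Lᵀ = star A := by
    rw [← Matrix.conjTranspose_eq_transpose_of_trivial, ← Matrix.star_eq_conjTranspose, hAdef]
    exact map_star (Matrix.toEuclideanCLM (𝕜 := ℝ)) L
  have hA : ∀ x y : EuclideanSpace ℝ (Fin n),
      (inner ℝ (A x) y : ℝ) = -(inner ℝ x (A y) : ℝ) := by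
    intro x y
    have h1 : (inner ℝ (A x) y : ℝ) = inner ℝ x (toE Lᵀ y) := by
      rw [hstar, ContinuousLinearMap.star_eq_adjoint,
        ContinuousLinearMap.adjoint_inner_right]
    rw [h1, hL]
    have h2 : toE (-L) = -A := by
      rw [hAdef]; exact _root_.map_neg (Matrix.toEuclideanCLM (𝕜 := ℝ)) L
    rw [h2, ContinuousLinearMap.neg_apply, inner_neg_right]
  -- pointwise descriptions of N and Q
  have hMapp : ∀ x : EuclideanSpace ℝ (Fin n), toE Mm x = η • x - A x := by
    intro x
    rw [hMm, toE_sub, toE_smul, toE_one, ContinuousLinearMap.sub_apply,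
      ContinuousLinearMap.smul_apply, ContinuousLinearMap.one_apply, hAdef]
  have hNx : ∀ x : EuclideanSpace ℝ (Fin n),
      toE Nm x = (η • (η • x - A x) - A (η • x - A x)) + β ^ 2 • x := by
    intro x
    have hNmat : Nm = Mm * Mm + β ^ 2 • (1 : Matrix (Fin n) (Fin n) ℝ) := by
      rw [hNm, pow_two]
    rw [hNmat, toE_add, toE_mul, toE_smul, toE_one, ContinuousLinearMap.add_apply,
      ContinuousLinearMap.mul_apply, ContinuousLinearMap.smul_apply,
      ContinuousLinearMap.one_apply, hMapp, hMapp]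
  have hQx : ∀ x : EuclideanSpace ℝ (Fin n),
      toE Qm x = (η • (η • x - A x) - A (η • x - A x))
        + (β ^ 2 / η) • (η • x - A x) := by
    intro x
    have hQmat : Qm = Mm * Mm + (β ^ 2 / η) • Mm := by
      rw [hQm, hGm, hMm, hγs]
      have h3 : (η + β ^ 2 / η) • (1 : Matrix (Fin n) (Fin n) ℝ) - L =
          (η • (1 : Matrix (Fin n) (Fin n) ℝ) - L)
            + (β ^ 2 / η) • (1 : Matrix (Fin n) (Fin n) ℝ) := by module
      rw [h3, mul_add, mul_smul_comm, mul_one]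
    rw [hQmat, toE_add, toE_mul, toE_smul, ContinuousLinearMap.add_apply,
      ContinuousLinearMap.mul_apply, ContinuousLinearMap.smul_apply, hMapp, hMapp]
  -- invertibility
  have hγpos : 0 < γs := by rw [hγs]; positivity
  have inj_shift : ∀ c : ℝ, 0 < c →
      Function.Injective (toE (c • (1 : Matrix (Fin n) (Fin n) ℝ) - L)) := by
    intro c hcpos a b hab
    have hker : ∀ x : EuclideanSpace ℝ (Fin n),
        toE (c • (1 : Matrix (Fin n) (Fin n) ℝ) - L) x = 0 → x = 0 := by
      intro x hx
      have happ : toE (c • (1 : Matrix (Fin n) (Fin n) ℝ) - L) x = c • x - A x := by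
        rw [toE_sub, toE_smul, toE_one, ContinuousLinearMap.sub_apply,
          ContinuousLinearMap.smul_apply, ContinuousLinearMap.one_apply, hAdef]
      rw [happ] at hx
      have h0 : (inner ℝ (c • x - A x) x : ℝ) = 0 := by rw [hx, inner_zero_left]
      have h1 : (inner ℝ (A x) x : ℝ) = 0 := skew_inner_self A hA x
      rw [inner_sub_left, real_inner_smul_left, real_inner_self_eq_norm_sq, h1,
        sub_zero] at h0
      have : ‖x‖ ^ 2 = 0 := by
        rcases mul_eq_zero.mp h0 with h | h
        · exact absurd h (ne_of_gt hcpos)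
        · exact h
      exact norm_eq_zero.mp ((pow_eq_zero_iff (n := 2) (by norm_num)).mp this)
    have : toE (c • (1 : Matrix (Fin n) (Fin n) ℝ) - L) (a - b) = 0 := by
      rw [_root_.map_sub, hab, sub_self]
    have := hker _ this
    exact sub_eq_zero.mp this
  have hUM : IsUnit Mm := isUnit_of_toE_inj _ (hMm ▸ inj_shift η hη)
  have hUG : IsUnit Gm := isUnit_of_toE_inj _ (hGm ▸ inj_shift γs hγpos)
  have hUQ : IsUnit Qm := hQm ▸ hUM.mul hUG
  have hUN : IsUnit Nm := by
    apply isUnit_of_toE_inj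
    intro a b hab
    have h0 : toE Nm (a - b) = 0 := by rw [_root_.map_sub, hab, sub_self]
    rw [hNx] at h0
    have := (key_estimates A hA η β hη (a - b)).2.2 h0
    exact sub_eq_zero.mp this
  have hdQ : IsUnit Qm.det := (Matrix.isUnit_iff_isUnit_det _).mp hUQ
  have hdN : IsUnit Nm.det := (Matrix.isUnit_iff_isUnit_det _).mp hUN
  have hQQi : Qm * Qm⁻¹ = 1 := Matrix.mul_nonsing_inv _ hdQ
  have hNNi : Nm * Nm⁻¹ = 1 := Matrix.mul_nonsing_inv _ hdN
  have hPinv : P⁻¹ = Qm * Nm⁻¹ := by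
    rw [hP, Matrix.mul_inv_rev, Matrix.nonsing_inv_nonsing_inv _ hdQ]
  have hc0 : (0:ℝ) ≤ 1 + β ^ 2 / (2 * η ^ 2) := by positivity
  -- norm bounds
  have hnormP : ‖toE P‖ ≤ 1 := by
    apply ContinuousLinearMap.opNorm_le_bound _ zero_le_one
    intro v
    have hv : toE Qm (toE Qm⁻¹ v) = v := by
      have h4 : toE (Qm * Qm⁻¹) v = v := by
        rw [hQQi, toE_one, ContinuousLinearMap.one_apply]
      rwa [toE_mul, ContinuousLinearMap.mul_apply] at h4
    have h1 : toE P v = toE Nm (toE Qm⁻¹ v) := by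
      rw [hP, toE_mul, ContinuousLinearMap.mul_apply]
    rw [one_mul]
    calc ‖toE P v‖ = ‖toE Nm (toE Qm⁻¹ v)‖ := by rw [h1]
      _ ≤ ‖toE Qm (toE Qm⁻¹ v)‖ := by
          rw [hNx, hQx]; exact (key_estimates A hA η β hη (toE Qm⁻¹ v)).1
      _ = ‖v‖ := by rw [hv]
  have hnormPi : ‖toE P⁻¹‖ ≤ 1 + β ^ 2 / (2 * η ^ 2) := by
    apply ContinuousLinearMap.opNorm_le_bound _ hc0
    intro v
    have hv : toE Nm (toE Nm⁻¹ v) = v := by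
      have h4 : toE (Nm * Nm⁻¹) v = v := by
        rw [hNNi, toE_one, ContinuousLinearMap.one_apply]
      rwa [toE_mul, ContinuousLinearMap.mul_apply] at h4
    have h1 : toE P⁻¹ v = toE Qm (toE Nm⁻¹ v) := by
      rw [hPinv, toE_mul, ContinuousLinearMap.mul_apply]
    calc ‖toE P⁻¹ v‖ = ‖toE Qm (toE Nm⁻¹ v)‖ := by rw [h1]
      _ ≤ (1 + β ^ 2 / (2 * η ^ 2)) * ‖toE Nm (toE Nm⁻¹ v)‖ := by
          rw [hNx, hQx]; exact (key_estimates A hA η β hη (toE Nm⁻¹ v)).2.1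
      _ = (1 + β ^ 2 / (2 * η ^ 2)) * ‖v‖ := by rw [hv]
  calc ‖toE P‖ * ‖toE P⁻¹‖ ≤ 1 * (1 + β ^ 2 / (2 * η ^ 2)) :=
        mul_le_mul hnormP hnormPi (norm_nonneg _) zero_le_one
    _ = 1 + β ^ 2 / (2 * η ^ 2) := one_mul _
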